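/- arXiv:2405.14298 — 3 statements merged into one kernel-verified Lean document; each statement's English description precedes it below -/
import Mathlib

section
/- For every Coxeter matrix M on a finite set S = {1,…,n}, each map r_i : ℂ(q)^n → ℂ(q)^n defined on the standard basis α_1,…,α_n by r_i(α_j) = α_j − ⟨α_i, α_j⟩ α_i is an invertible linear map, for every pair i ≠ j with m_{ij} < ∞ the alternating products r_i r_j r_i ⋯ and r_j r_i r_j ⋯ with m_{ij} factors on each side are equal, and consequently there is a unique group homomorphism (the Burau representation) from the Artin–Tits group B(M) to GL_n(ℂ(q)) sending σ_i to r_i. -/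
set_option synthInstance.maxHeartbeats 400000

/-- The alternating word `i j i j ⋯` with `m` factors, as an element of the free group. -/
def altWord {α : Type*} (i j : α) : ℕ → FreeGroup α
  | 0 => 1
  | m + 1 => FreeGroup.of i * altWord j i m

/-- The braid relations associated to a Coxeter matrix: for each pair `i, j` with
`M i j ≠ 0` (i.e. `m_{ij} < ∞`), the relation `(σᵢσⱼσᵢ⋯)(σⱼσᵢσⱼ⋯)⁻¹` with `m_{ij}` factors in
each alternating product. -/
def artinRels {B : Type*} (M : CoxeterMatrix B) : Set (FreeGroup B) :=
  {r | ∃ i j : B, M i j ≠ 0 ∧ r = altWord i j (M i j) * (altWord j i (M i j))⁻¹}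

/-- The Artin–Tits group of a Coxeter matrix. -/
abbrev ArtinTitsGroup {B : Type*} (M : CoxeterMatrix B) := PresentedGroup (artinRels M)

/-- The standard generators of the Artin–Tits group. -/
def artinσ {B : Type*} (M : CoxeterMatrix B) (i : B) : ArtinTitsGroup M := PresentedGroup.of i

/-- The `q`-deformed pairing on `ℂ(q)^n` associated to a Coxeter matrix:
`⟨αᵢ, αᵢ⟩ = 1 + q²`, `⟨αᵢ, αⱼ⟩ = -2q·cos(π/m_{ij})` if `i ≠ j` and `m_{ij} < ∞`
(recall `m_{ij} = 0` encodes `m_{ij} = ∞`), and `⟨αᵢ, αⱼ⟩ = -2` if `m_{ij} = ∞`. -/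
noncomputable def burauPairing {n : ℕ} (M : CoxeterMatrix (Fin n)) (i j : Fin n) : RatFunc ℂ :=
  if i = j then 1 + RatFunc.X ^ 2
  else if M i j = 0 then -2
  else -(2 * RatFunc.X * RatFunc.C ((Real.cos (Real.pi / (M i j)) : ℂ)))

/-- The matrix of the map `rᵢ` determined by `rᵢ(αⱼ) = αⱼ - ⟨αᵢ, αⱼ⟩ αᵢ` on the standard
basis `α_1, …, α_n` of `ℂ(q)^n`. -/
noncomputable def burauRefl {n : ℕ} (M : CoxeterMatrix (Fin n)) (i : Fin n) :
    Matrix (Fin n) (Fin n) (RatFunc ℂ) :=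
  Matrix.of fun k j =>
    (if k = j then 1 else 0) - burauPairing M i j * (if k = i then 1 else 0)

/-- The alternating product `a b a b ⋯` with `m` factors in a monoid. -/
def altProd {R : Type*} [Monoid R] (a b : R) : ℕ → R
  | 0 => 1
  | m + 1 => a * altProd b a m

/-!
Write `rᵢ = 1 - αᵢ ⟨αᵢ, -⟩`. By the matrix determinant lemma `det rᵢ = 1 - ⟨αᵢ, αᵢ⟩ = -q²`, so
`rᵢ` is invertible.

For the braid relation of `i ≠ j`, let `W` be the `n × 2` matrix with columns `αᵢ, αⱼ`, `V` the
`2 × n` matrix with rows `⟨αᵢ, -⟩, ⟨αⱼ, -⟩`, and `P = V W` their (invertible) Gram matrix. Then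
`Q ↦ 1 - W (1 - Q) P⁻¹ V` is multiplicative on `2 × 2` matrices and sends `a = 1 - E₁₁ P` and
`b = 1 - E₂₂ P` to `rᵢ` and `rⱼ`, so the relation only has to be checked for `a` and `b`. Their
product satisfies `(ab)² = 2q² cos(2π/m) ab - q⁴`, so the powers of `ab` are given by the Chebyshev
polynomials `U_k(cos(2π/m))`. Through `U_{2k+1}(y) = 2y U_k(2y² - 1)` and
`U_{2k}(y) = U_k(2y² - 1) + U_{k-1}(2y² - 1)` the relation reduces to
`U_{m-1}(cos(π/m)) = sin π / sin(π/m) = 0`.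

Since `B(M)` is presented by the braid relations, the `rᵢ` define a unique homomorphism.
-/

open Matrix Polynomial.Chebyshev

section AltProd

variable {G H : Type*} [Monoid G] [Monoid H]

theorem map_altProd {F : Type*} [FunLike F G H] [MonoidHomClass F G H] (f : F) (a b : G)
    (m : ℕ) : f (altProd a b m) = altProd (f a) (f b) m := by
  induction m generalizing a b with
  | zero => simp [altProd]
  | succ m ih => simp [altProd, ih]

theorem altProd_two_mul (a b : G) (k : ℕ) : altProd a b (2 * k) = (a * b) ^ k := by
  induction k with
  | zero => simp [altProd]
  | succ k ih => rw [Nat.mul_succ, altProd, altProd, ih, ← mul_assoc, pow_succ']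

theorem altProd_two_mul_add_one (a b : G) (k : ℕ) :
    altProd a b (2 * k + 1) = (a * b) ^ k * a := by
  rw [altProd, altProd_two_mul, mul_pow_mul]

theorem FreeGroup.lift_altWord {α K : Type*} [Group K] (f : α → K) (i j : α) (m : ℕ) :
    FreeGroup.lift f (altWord i j m) = altProd (f i) (f j) m := by
  induction m generalizing i j with
  | zero => simp [altWord, altProd]
  | succ m ih => simp [altWord, altProd, ih]

end AltProd

namespace Polynomial.Chebyshev

variable {R : Type*} [CommRing R]

theorem U_eval_two_mul_and_two_mul_add_one (y : R) (k : ℕ) :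
    (U R (2 * k)).eval y =
        (U R k).eval (2 * y ^ 2 - 1) + (U R ((k : ℤ) - 1)).eval (2 * y ^ 2 - 1) ∧
      (U R (2 * k + 1)).eval y = 2 * y * (U R k).eval (2 * y ^ 2 - 1) := by
  induction k with
  | zero => simp
  | succ k ih =>
    obtain ⟨h_even, h_odd⟩ := ih
    have h_even' : (U R (2 * ((k + 1 : ℕ) : ℤ))).eval y =
        2 * y * (U R (2 * k + 1)).eval y - (U R (2 * k)).eval y := by
      rw [show 2 * ((k + 1 : ℕ) : ℤ) = 2 * k + 2 by push_cast; ring, U_add_two]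
      simp
    have h_odd' : (U R (2 * ((k + 1 : ℕ) : ℤ) + 1)).eval y =
        2 * y * (U R (2 * ((k + 1 : ℕ) : ℤ))).eval y - (U R (2 * k + 1)).eval y := by
      rw [show 2 * ((k + 1 : ℕ) : ℤ) + 1 = 2 * k + 1 + 2 by push_cast; ring, U_add_two]
      simp [show (2 * k + 1 + 1 : ℤ) = 2 * ((k + 1 : ℕ) : ℤ) by push_cast; ring]
    have h_next : (U R ((k + 1 : ℕ) : ℤ)).eval (2 * y ^ 2 - 1) =
        2 * (2 * y ^ 2 - 1) * (U R k).eval (2 * y ^ 2 - 1) -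
          (U R ((k : ℤ) - 1)).eval (2 * y ^ 2 - 1) := by
      rw [Nat.cast_succ, U_add_one]
      simp
    rw [show ((k + 1 : ℕ) : ℤ) - 1 = k by push_cast; ring]
    constructor
    · rw [h_even', h_even, h_odd, h_next]
      ring
    · rw [h_odd', h_even', h_even, h_odd, h_next]
      ring

open Real in
theorem U_eval_cos_pi_div_eq_zero {m : ℕ} (hm : 2 ≤ m) :
    (U ℝ ((m : ℤ) - 1)).eval (cos (π / m)) = 0 := by
  have h_sin : sin (π / m) ≠ 0 := by
    refine (sin_pos_of_pos_of_lt_pi (by positivity) ?_).ne'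
    exact div_lt_self pi_pos (by exact_mod_cast hm)
  have h := U_real_cos (π / m) ((m : ℤ) - 1)
  rw [show ((((m : ℤ) - 1 : ℤ) : ℝ) + 1) * (π / m) = π by field_simp; push_cast; ring,
    sin_pi] at h
  exact (mul_eq_zero.mp h).resolve_right h_sin

open Real in
theorem U_eval_C_cos_pi_div_eq_zero {m : ℕ} (hm : 2 ≤ m) :
    (U (RatFunc ℂ) ((m : ℤ) - 1)).eval (RatFunc.C ((cos (π / m) : ℝ) : ℂ)) = 0 := by
  rw [RatFunc.C, ← Complex.coe_algebraMap, ← algebraMap_eval_U, ← algebraMap_eval_U,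
    U_eval_cos_pi_div_eq_zero hm, map_zero, map_zero]

end Polynomial.Chebyshev

section CayleyHamilton

variable {R A : Type*} [CommRing R] [Ring A] [Algebra R A]

theorem pow_succ_eq_of_mul_self_eq {S : A} {x u : R} (hS : S * S = (2 * x * u) • S - u ^ 2 • 1)
    (k : ℕ) :
    S ^ (k + 1) =
      (u ^ k * (U R k).eval x) • S - (u ^ (k + 1) * (U R ((k : ℤ) - 1)).eval x) • 1 := by
  induction k with
  | zero => simp
  | succ k ih =>
    rw [pow_succ, ih, sub_mul, smul_mul_assoc, hS, Nat.cast_succ, U_add_one]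
    simp only [add_sub_cancel_right, Polynomial.eval_sub, Polynomial.eval_mul,
      Polynomial.eval_ofNat, Polynomial.eval_X, smul_sub, smul_smul, one_mul, smul_mul_assoc]
    module

variable {a b : A} {x u : R}

theorem altProd_two_mul_succ_eq (hab : a * b * (a * b) = (2 * x * u) • (a * b) - u ^ 2 • 1)
    (hba : b * a * (b * a) = (2 * x * u) • (b * a) - u ^ 2 • 1) (k : ℕ)
    (hk : (U R k).eval x • (a * b) = (U R k).eval x • (b * a)) :
    altProd a b (2 * (k + 1)) = altProd b a (2 * (k + 1)) := by
  rw [altProd_two_mul, altProd_two_mul, pow_succ_eq_of_mul_self_eq hab,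
    pow_succ_eq_of_mul_self_eq hba]
  simp only [mul_smul, hk]

theorem altProd_two_mul_succ_add_one_eq
    (hab : a * b * (a * b) = (2 * x * u) • (a * b) - u ^ 2 • 1)
    (hba : b * a * (b * a) = (2 * x * u) • (b * a) - u ^ 2 • 1) (k : ℕ)
    (hk : (U R k).eval x • (a * b * a - b * a * b) =
      (u * (U R ((k : ℤ) - 1)).eval x) • (a - b)) :
    altProd a b (2 * (k + 1) + 1) = altProd b a (2 * (k + 1) + 1) := by
  rw [altProd_two_mul_add_one, altProd_two_mul_add_one, pow_succ_eq_of_mul_self_eq hab,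
    pow_succ_eq_of_mul_self_eq hba]
  simp only [sub_mul, smul_mul_assoc, one_mul]
  linear_combination (norm := module) (u ^ k) • hk

end CayleyHamilton

-- `1 - E₁₁ P` and `1 - E₂₂ P` for the Gram matrix `P` with entries `1 + s²` and `-2sy`.
theorem altProd_rank_two_eq {R : Type*} [CommRing R] (s y : R) {m : ℕ} (hy : (U R ((m : ℤ) - 1)).eval y = 0) :
    altProd !![-s ^ 2, 2 * s * y; 0, 1] !![1, 0; 2 * s * y, -s ^ 2] m =
      altProd !![1, 0; 2 * s * y, -s ^ 2] !![-s ^ 2, 2 * s * y; 0, 1] m := by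
  set a : Matrix (Fin 2) (Fin 2) R := !![-s ^ 2, 2 * s * y; 0, 1]
  set b : Matrix (Fin 2) (Fin 2) R := !![1, 0; 2 * s * y, -s ^ 2]
  set x := 2 * y ^ 2 - 1
  have hab : a * b * (a * b) = (2 * x * s ^ 2) • (a * b) - (s ^ 2) ^ 2 • 1 := by
    ext i j
    fin_cases i <;> fin_cases j <;> simp [a, b, x] <;> ring
  have hba : b * a * (b * a) = (2 * x * s ^ 2) • (b * a) - (s ^ 2) ^ 2 • 1 := by
    ext i j
    fin_cases i <;> fin_cases j <;> simp [a, b, x] <;> ring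
  obtain ⟨k, rfl | rfl⟩ := Nat.even_or_odd' m
  · cases k with
    | zero => rfl
    | succ k =>
      rw [show ((2 * (k + 1) : ℕ) : ℤ) - 1 = 2 * k + 1 by push_cast; ring,
        (U_eval_two_mul_and_two_mul_add_one y k).2] at hy
      have h_comm : a * b = b * a +
          (2 * s * y) • !![2 * s * y, -(1 + s ^ 2); 1 + s ^ 2, -(2 * s * y)] := by
        ext i j
        fin_cases i <;> fin_cases j <;> simp [a, b] <;> ring
      refine altProd_two_mul_succ_eq hab hba k ?_
      rw [h_comm, smul_add, smul_smul, show (U R k).eval x * (2 * s * y) = 0 by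
        linear_combination s * hy, zero_smul, add_zero]
  · cases k with
    | zero =>
      have : Subsingleton R := subsingleton_of_zero_eq_one (by simpa using hy.symm)
      exact Subsingleton.elim _ _
    | succ k =>
      rw [show ((2 * (k + 1) + 1 : ℕ) : ℤ) - 1 = 2 * ((k + 1 : ℕ) : ℤ) by push_cast; ring,
        (U_eval_two_mul_and_two_mul_add_one y (k + 1)).1,
        show ((k + 1 : ℕ) : ℤ) - 1 = k by push_cast; ring, Nat.cast_succ, U_add_one] at hy
      simp only [Polynomial.eval_sub, Polynomial.eval_mul, Polynomial.eval_ofNat,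
        Polynomial.eval_X] at hy
      have h_braid : a * b * a - b * a * b = (s ^ 2 * (2 * x + 1)) • (a - b) := by
        ext i j
        fin_cases i <;> fin_cases j <;> simp [a, b, x] <;> ring
      refine altProd_two_mul_succ_add_one_eq hab hba k ?_
      rw [h_braid, smul_smul]
      congr 1
      linear_combination s ^ 2 * hy

section LowRankHom

variable {R : Type*} [CommRing R] {n m : Type*} [Fintype n] [DecidableEq n] [Fintype m]
  [DecidableEq m]

def Matrix.lowRankHom (W : Matrix n m R) (V : Matrix m n R) (L : Matrix m m R)
    (hL : L * (V * W) = 1) : Matrix m m R →* Matrix n n R where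
  toFun Q := 1 - W * ((1 - Q) * L) * V
  map_one' := by simp
  map_mul' Q Q' := by
    have key : (1 - Q) * L * (V * W) * ((1 - Q') * L) = (1 - Q) * (1 - Q') * L := by
      rw [mul_assoc (1 - Q) L, hL, mul_one, mul_assoc]
    rw [show 1 - Q * Q' = (1 - Q) + (1 - Q') - (1 - Q) * (1 - Q') by noncomm_ring,
      sub_mul ((1 - Q) + (1 - Q')), add_mul, ← key]
    simp only [Matrix.mul_sub, Matrix.sub_mul, Matrix.mul_add, Matrix.add_mul, Matrix.mul_one,
      Matrix.one_mul, Matrix.mul_assoc]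
    abel

theorem Matrix.lowRankHom_one_sub_mul {W : Matrix n m R} {V : Matrix m n R} {L : Matrix m m R}
    (hL : L * (V * W) = 1) (X : Matrix m m R) :
    lowRankHom W V L hL (1 - X * (V * W)) = 1 - W * X * V := by
  simp [lowRankHom, mul_assoc, mul_eq_one_comm.mp hL]

end LowRankHom

theorem Matrix.det_one_sub_vecMulVec {R : Type*} [CommRing R] {n : Type*} [Fintype n]
    [DecidableEq n] (u v : n → R) : (1 - vecMulVec u v).det = 1 - v ⬝ᵥ u := by
  rw [vecMulVec_eq Unit, det_one_sub_mul_comm, det_unique, sub_apply, one_apply_eq,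
    replicateRow_mul_replicateCol_apply]

open RatFunc in
theorem one_add_X_sq_sq_sub_ne_zero (w : ℂ) :
    (1 + X ^ 2) ^ 2 - (2 * X * C w) ^ 2 ≠ (0 : RatFunc ℂ) := by
  have h_poly : ((1 + .X ^ 2) ^ 2 - (2 * .X * .C w) ^ 2 : Polynomial ℂ) ≠ 0 := fun h => by
    simpa using congrArg (Polynomial.eval 0) h
  convert (map_ne_zero_iff _ (algebraMap_injective ℂ)).mpr h_poly
  simp [algebraMap_X, algebraMap_C, map_ofNat]

section Burau

variable {n : ℕ} (M : CoxeterMatrix (Fin n))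

theorem burauPairing_self (i : Fin n) : burauPairing M i i = 1 + RatFunc.X ^ 2 := if_pos rfl

theorem burauRefl_eq_one_sub_vecMulVec (i : Fin n) :
    burauRefl M i = 1 - vecMulVec (Pi.single i 1) (burauPairing M i) := by
  ext k l
  simp [burauRefl, vecMulVec_apply, one_apply, Pi.single_apply, mul_comm]

theorem det_burauRefl (i : Fin n) : (burauRefl M i).det = -RatFunc.X ^ 2 := by
  rw [burauRefl_eq_one_sub_vecMulVec, det_one_sub_vecMulVec, dotProduct_single, mul_one,
    burauPairing_self]
  ring

theorem isUnit_burauRefl (i : Fin n) : IsUnit (burauRefl M i) := by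
  rw [isUnit_iff_isUnit_det, det_burauRefl, isUnit_iff_ne_zero]
  exact neg_ne_zero.mpr (pow_ne_zero 2 RatFunc.X_ne_zero)

variable {ι : Type*} (e : ι → Fin n)

noncomputable def burauCols : Matrix (Fin n) ι (RatFunc ℂ) :=
  of fun k a => (Pi.single (e a) 1 : Fin n → RatFunc ℂ) k

noncomputable def burauRows : Matrix ι (Fin n) (RatFunc ℂ) := of fun a => burauPairing M (e a)

theorem burauRows_mul_burauCols :
    burauRows M e * burauCols e = of fun a b => burauPairing M (e a) (e b) := by
  ext a b
  simp [mul_apply', burauRows, burauCols, dotProduct_single]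

theorem burauCols_mul_single_mul_burauRows [Fintype ι] [DecidableEq ι] (a : ι) :
    burauCols e * single a a (1 : RatFunc ℂ) * burauRows M e =
      vecMulVec (Pi.single (e a) 1) (burauPairing M (e a)) := by
  ext k l
  simp [mul_apply, burauRows, burauCols, vecMulVec_apply, single_apply, ite_and]

theorem burauRefl_eq_lowRankHom [Fintype ι] [DecidableEq ι] {L : Matrix ι ι (RatFunc ℂ)}
    (hL : L * (burauRows M e * burauCols e) = 1) (a : ι) :
    burauRefl M (e a) = lowRankHom (burauCols e) (burauRows M e) L hL
      (1 - single a a (1 : RatFunc ℂ) * (burauRows M e * burauCols e)) := by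
  rw [lowRankHom_one_sub_mul, burauCols_mul_single_mul_burauRows,
    burauRefl_eq_one_sub_vecMulVec]

end Burau

open Real RatFunc in
theorem burauRefl_altProd_eq {n : ℕ} (M : CoxeterMatrix (Fin n)) {i j : Fin n} (hij : i ≠ j)
    (h0 : M i j ≠ 0) :
    altProd (burauRefl M i) (burauRefl M j) (M i j) =
      altProd (burauRefl M j) (burauRefl M i) (M i j) := by
  have hm : 2 ≤ M i j := by
    have := M.off_diagonal i j hij
    omega
  set w : ℂ := (cos (π / M i j) : ℂ)
  have hG : burauRows M ![i, j] * burauCols ![i, j] =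
      !![1 + X ^ 2, -(2 * X * C w); -(2 * X * C w), 1 + X ^ 2] := by
    rw [burauRows_mul_burauCols]
    ext a b
    fin_cases a <;> fin_cases b <;>
      simp [burauPairing, hij, hij.symm, h0, M.symmetric j i, w]
  have hL : (burauRows M ![i, j] * burauCols ![i, j])⁻¹ *
      (burauRows M ![i, j] * burauCols ![i, j]) = 1 := by
    refine nonsing_inv_mul _ (isUnit_iff_ne_zero.mpr ?_)
    rw [hG, det_fin_two_of]
    convert one_add_X_sq_sq_sub_ne_zero w using 1
    ring
  set Φ := lowRankHom _ _ _ hL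
  have hi : burauRefl M i = Φ !![-X ^ 2, 2 * X * C w; 0, 1] := by
    refine (burauRefl_eq_lowRankHom M ![i, j] hL 0).trans (congrArg Φ ?_)
    rw [hG]
    ext a b
    fin_cases a <;> fin_cases b <;> simp
  have hj : burauRefl M j = Φ !![1, 0; 2 * X * C w, -X ^ 2] := by
    refine (burauRefl_eq_lowRankHom M ![i, j] hL 1).trans (congrArg Φ ?_)
    rw [hG]
    ext a b
    fin_cases a <;> fin_cases b <;> simp
  rw [hi, hj, ← map_altProd Φ, ← map_altProd Φ,
    altProd_rank_two_eq _ _ (U_eval_C_cos_pi_div_eq_zero hm)]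

theorem ArtinTitsGroup.existsUnique_lift {B H : Type*} [Group H] (M : CoxeterMatrix B)
    (f : B → H)
    (hf : ∀ i j, i ≠ j → M i j ≠ 0 →
      altProd (f i) (f j) (M i j) = altProd (f j) (f i) (M i j)) :
    ∃! φ : ArtinTitsGroup M →* H, ∀ i, φ (artinσ M i) = f i := by
  have hrels : ∀ r ∈ artinRels M, FreeGroup.lift f r = 1 := by
    rintro r ⟨i, j, h0, rfl⟩
    rw [map_mul, map_inv, FreeGroup.lift_altWord, FreeGroup.lift_altWord, mul_inv_eq_one]
    rcases eq_or_ne i j with rfl | hij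
    · rfl
    · exact hf i j hij h0
  refine ⟨PresentedGroup.toGroup hrels, fun i => PresentedGroup.toGroup.of hrels, fun ψ hψ => ?_⟩
  exact PresentedGroup.ext fun i => (hψ i).trans (PresentedGroup.toGroup.of hrels).symm

/-- For every Coxeter matrix `M` on `{1,…,n}`: each `rᵢ` sends the basis vector `αⱼ` to
`αⱼ - ⟨αᵢ, αⱼ⟩ αᵢ`; each `rᵢ` is invertible; the alternating products of `m_{ij}` factors
`rᵢ rⱼ rᵢ ⋯ = rⱼ rᵢ rⱼ ⋯` agree whenever `i ≠ j` and `m_{ij} < ∞`; and consequently there is a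
unique group homomorphism (the Burau representation) from the Artin–Tits group `B(M)` to
`GL_n(ℂ(q))` sending each generator `σᵢ` to `rᵢ`. -/
theorem statement0 {n : ℕ} (M : CoxeterMatrix (Fin n)) :
    (∀ i j : Fin n, (burauRefl M i).mulVec (Pi.single j 1) =
      (Pi.single j 1 : Fin n → RatFunc ℂ) - burauPairing M i j • (Pi.single i 1 : Fin n → RatFunc ℂ)) ∧
    (∀ i : Fin n, IsUnit (burauRefl M i)) ∧
    (∀ i j : Fin n, i ≠ j → M i j ≠ 0 →
      altProd (burauRefl M i) (burauRefl M j) (M i j) =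
        altProd (burauRefl M j) (burauRefl M i) (M i j)) ∧
    (∃! φ : ArtinTitsGroup M →* GL (Fin n) (RatFunc ℂ),
      ∀ i : Fin n, (φ (artinσ M i) : Matrix (Fin n) (Fin n) (RatFunc ℂ)) = burauRefl M i) := by
  refine ⟨fun i j => ?_, isUnit_burauRefl M, fun i j => burauRefl_altProd_eq M, ?_⟩
  · rw [burauRefl_eq_one_sub_vecMulVec, sub_mulVec, one_mulVec, vecMulVec_mulVec,
      dotProduct_single, mul_one, op_smul_eq_smul]
  · let r i := (isUnit_burauRefl M i).unit
    have hr : ∀ i j, i ≠ j → M i j ≠ 0 →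
        altProd (r i) (r j) (M i j) = altProd (r j) (r i) (M i j) := fun i j hij h0 =>
      Units.ext <| by
        rw [← Units.coeHom_apply, ← Units.coeHom_apply, map_altProd, map_altProd]
        simpa [r] using burauRefl_altProd_eq M hij h0
    simpa [Units.ext_iff, r] using ArtinTitsGroup.existsUnique_lift M r hr
end

section
/- Every element β of the 3-strand braid group B_3 can be written as β = γ^n · σ_{a_1}^{m_1} σ_{a_2}^{m_2} ⋯ σ_{a_k}^{m_k}, where γ = σ_1σ_2, n ∈ ℤ, k ≥ 0, each m_j is a positive integer, each a_j ∈ {1, 2, X} with σ_X := σ_1 σ_2 σ_1^{−1}, and (a_1, …, a_k) is a contiguous subsequence of the bi-infinite periodic sequence (…, X, 1, 2, X, 1, 2, X, …), i.e. for each 1 ≤ j ≤ k−1 the pair (a_j, a_{j+1}) is one of (X,1), (1,2), (2,X). -/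
set_option synthInstance.maxHeartbeats 400000

/-- The braid group on `n` strands, presented with generators `σ_1, …, σ_{n-1}`
(indexed by `Fin (n-1)`) and the braid relations. -/
abbrev BraidGroup (n : ℕ) := ArtinTitsGroup (CoxeterMatrix.Aₙ (n - 1))

/-- The standard generator `σ_{i+1}` of the braid group `B_n`, for `i : Fin (n-1)`. -/
def braidσ (n : ℕ) (i : Fin (n - 1)) : BraidGroup n := artinσ _ i


/-- The three dual generators `σ₁`, `σ₂`, `σ_X = σ₁σ₂σ₁⁻¹` of the braid group `B₃`. -/
def dualGen : Fin 3 → BraidGroup 3 :=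
  ![braidσ 3 0, braidσ 3 1, braidσ 3 0 * braidσ 3 1 * (braidσ 3 0)⁻¹]

/-!
Put `δ = σ₁σ₂` and `(d₀, d₁, d₂) = (σ₁, σ₂, σ_X)`. The relations `dᵢ dᵢ₊₁ = δ` (indices mod 3)
give `δ dᵢ δ⁻¹ = dᵢ₊₁`, so `δ` moves to the left through any word at the cost of shifting its
indices, and `dᵢ⁻¹ = dᵢ₊₁ δ⁻¹`. It therefore suffices that the elements
`δᵐ d_s^{e₀} d_{s+1}^{e₁} ⋯` with positive exponents are stable under right multiplication by
`δ⁻¹` and by each `dᵢ`. If the word ends in `d_t^e`, then `d_t` raises the last exponent,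
`d_{t+1}` opens a new block, and `d_{t-1}` is absorbed by
`d_t^e d_{t-1} = δ⁻¹ d_{t+1}^{e+1} d_{t-1}^2`.
-/

theorem ArtinTitsGroup.mk_altWord_eq {B : Type*} (M : CoxeterMatrix B) {i j : B}
    (h : M i j ≠ 0) :
    PresentedGroup.mk (artinRels M) (altWord i j (M i j)) =
      PresentedGroup.mk (artinRels M) (altWord j i (M i j)) :=
  PresentedGroup.mk_eq_mk_of_mul_inv_mem ⟨i, j, h, rfl⟩

theorem braidσ_three_braid_rel :
    braidσ 3 0 * braidσ 3 1 * braidσ 3 0 = braidσ 3 1 * braidσ 3 0 * braidσ 3 1 := by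
  have h := ArtinTitsGroup.mk_altWord_eq (CoxeterMatrix.A 2) (i := 0) (j := 1) (by decide)
  rw [show CoxeterMatrix.A 2 0 1 = 3 by decide] at h
  simp only [altWord, map_mul, mul_one] at h
  simp only [mul_assoc]
  exact h

theorem dualGen_mul_dualGen_succ (i : Fin 3) :
    dualGen i * dualGen (i + 1) = braidσ 3 0 * braidσ 3 1 := by
  have h := braidσ_three_braid_rel
  fin_cases i
  · rfl
  · change braidσ 3 1 * (braidσ 3 0 * braidσ 3 1 * (braidσ 3 0)⁻¹) = _
    rw [← mul_assoc, ← mul_assoc, ← h]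
    group
  · change braidσ 3 0 * braidσ 3 1 * (braidσ 3 0)⁻¹ * braidσ 3 0 = _
    group

theorem closure_range_dualGen : Subgroup.closure (Set.range dualGen) = ⊤ := by
  rw [eq_top_iff, ← PresentedGroup.closure_range_of]
  refine Subgroup.closure_mono ?_
  rintro _ ⟨i, rfl⟩
  fin_cases i
  exacts [⟨0, rfl⟩, ⟨1, rfl⟩]

namespace DualBraid

open Fin.NatCast Fin.CommRing

variable {G : Type*} [Group G]

def cyclicWord (d : Fin 3 → G) : Fin 3 → List ℕ → G
  | _, [] => 1
  | s, e :: es => d s ^ e * cyclicWord d (s + 1) es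

theorem cyclicWord_append_singleton (d : Fin 3 → G) (s : Fin 3) (es : List ℕ) (e : ℕ) :
    cyclicWord d s (es ++ [e]) = cyclicWord d s es * d (s + es.length) ^ e := by
  induction es generalizing s with
  | nil => simp [cyclicWord]
  | cons e' es ih =>
    rw [List.cons_append, cyclicWord, cyclicWord, ih, mul_assoc, List.length_cons]
    congr 4
    push_cast
    ring

theorem cyclicWord_eq_prod_ofFn (d : Fin 3 → G) (s : Fin 3) (es : List ℕ) :
    cyclicWord d s es = (List.ofFn fun j : Fin es.length => d (s + (j : ℕ)) ^ es[j]).prod := by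
  induction es generalizing s with
  | nil => rfl
  | cons e es ih =>
    rw [cyclicWord, ih, List.ofFn_succ, List.prod_cons]
    simp only [Fin.val_zero, Nat.cast_zero, add_zero, Fin.val_succ, Nat.cast_succ, add_assoc,
      add_comm (1 : Fin 3)]
    rfl

def normalForms (δ : G) (d : Fin 3 → G) : Set G :=
  {g | ∃ (m : ℤ) (s : Fin 3) (es : List ℕ), (∀ e ∈ es, 0 < e) ∧ g = δ ^ m * cyclicWord d s es}

variable {δ : G} {d : Fin 3 → G}

theorem semiconjBy_succ (hd : ∀ i, d i * d (i + 1) = δ) (i : Fin 3) :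
    SemiconjBy δ (d i) (d (i + 1)) := by
  have h1 : i + 1 + 1 = i + 2 := by ring
  have h2 : i + 2 + 1 = i := by decide +revert
  calc δ * d i = d (i + 1) * (d (i + 2) * d (i + 2 + 1)) := by rw [h2, ← h1, ← hd, mul_assoc]
    _ = d (i + 1) * δ := by rw [hd]

theorem semiconjBy_cyclicWord (hd : ∀ i, d i * d (i + 1) = δ) (s : Fin 3) (es : List ℕ) :
    SemiconjBy δ (cyclicWord d s es) (cyclicWord d (s + 1) es) := by
  induction es generalizing s with
  | nil => exact SemiconjBy.one_right δ
  | cons e es ih =>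
    exact ((semiconjBy_succ hd s).pow_right e).mul_right (by simpa using ih (s + 1))

theorem cyclicWord_mul_inv (hd : ∀ i, d i * d (i + 1) = δ) (s : Fin 3) (es : List ℕ) :
    cyclicWord d s es * δ⁻¹ = δ⁻¹ * cyclicWord d (s + 1) es :=
  (semiconjBy_cyclicWord hd s es).inv_symm_left.eq.symm

theorem pow_mul_add_two (hd : ∀ i, d i * d (i + 1) = δ) (i : Fin 3) (n : ℕ) :
    d i ^ n * d (i + 2) = δ⁻¹ * (d (i + 1) ^ (n + 1) * d (i + 2) ^ 2) := by
  rw [eq_inv_mul_iff_mul_eq, ← mul_assoc, ((semiconjBy_succ hd i).pow_right n).eq,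
    ← hd (i + 1), show i + 1 + 1 = i + 2 by ring, pow_succ _ n, sq]
  simp only [mul_assoc]

theorem mul_inv_mem_normalForms (hd : ∀ i, d i * d (i + 1) = δ) {g : G}
    (hg : g ∈ normalForms δ d) : g * δ⁻¹ ∈ normalForms δ d := by
  obtain ⟨m, s, es, hes, rfl⟩ := hg
  refine ⟨m - 1, s + 1, es, hes, ?_⟩
  rw [mul_assoc, cyclicWord_mul_inv hd, zpow_sub_one, mul_assoc]

theorem mul_mem_normalForms (hd : ∀ i, d i * d (i + 1) = δ) {g : G}
    (hg : g ∈ normalForms δ d) (i : Fin 3) : g * d i ∈ normalForms δ d := by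
  obtain ⟨m, s, es, hes, rfl⟩ := hg
  rcases es.eq_nil_or_concat' with rfl | ⟨es, e, rfl⟩
  · exact ⟨m, i, [1], by simp, by simp [cyclicWord]⟩
  obtain ⟨hes, he⟩ : (∀ x ∈ es, 0 < x) ∧ 0 < e := by simpa [or_imp, forall_and] using hes
  rw [cyclicWord_append_singleton]
  obtain rfl | rfl | rfl : i = s + es.length ∨ i = s + es.length + 1 ∨ i = s + es.length + 2 := by
    obtain ⟨r, rfl⟩ : ∃ r, i = s + es.length + r := ⟨i - (s + es.length), by ring⟩
    fin_cases r <;> simp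
  · refine ⟨m, s, es ++ [e + 1], by simpa [or_imp, forall_and] using hes, ?_⟩
    rw [cyclicWord_append_singleton, pow_succ]
    simp only [mul_assoc]
  · refine ⟨m, s, es ++ [e, 1], by simpa [or_imp, forall_and, he] using hes, ?_⟩
    rw [show es ++ [e, 1] = es ++ [e] ++ [1] by simp, cyclicWord_append_singleton,
      cyclicWord_append_singleton]
    simp [mul_assoc, add_assoc]
  · refine ⟨m - 1, s + 1, es ++ [e + 1, 2], by simpa [or_imp, forall_and] using hes, ?_⟩
    rw [show es ++ [e + 1, 2] = es ++ [e + 1] ++ [2] by simp, cyclicWord_append_singleton,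
      cyclicWord_append_singleton, mul_assoc, mul_assoc, pow_mul_add_two hd,
      ← mul_assoc (cyclicWord d s es), cyclicWord_mul_inv hd, zpow_sub_one]
    simp only [List.length_append, List.length_singleton, Nat.cast_add, Nat.cast_one]
    rw [show s + 1 + es.length = s + es.length + 1 by ring,
      show s + 1 + (es.length + 1) = s + es.length + 2 by ring]
    simp only [mul_assoc]

theorem closure_range_subset_normalForms (hd : ∀ i, d i * d (i + 1) = δ) :
    (Subgroup.closure (Set.range d) : Set G) ⊆ normalForms δ d := by
  intro g hg
  induction hg using Subgroup.closure_induction_right with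
  | one => exact ⟨0, 0, [], by simp, by simp [cyclicWord]⟩
  | mul_right x _ _ hy ih =>
    obtain ⟨i, rfl⟩ := hy
    exact mul_mem_normalForms hd ih i
  | mul_inv_cancel x _ _ hy ih =>
    obtain ⟨i, rfl⟩ := hy
    rw [show (d i)⁻¹ = d (i + 1) * δ⁻¹ by rw [← hd i]; group, ← mul_assoc]
    exact mul_inv_mem_normalForms hd (mul_mem_normalForms hd ih _)

theorem exists_normalForm (hd : ∀ i, d i * d (i + 1) = δ) {g : G}
    (hg : g ∈ Subgroup.closure (Set.range d)) :
    ∃ (m : ℤ) (k : ℕ) (a : Fin k → Fin 3) (e : Fin k → ℕ),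
      (∀ j, 0 < e j) ∧
      (∀ (j : ℕ) (h : j + 1 < k), a ⟨j + 1, h⟩ = a ⟨j, Nat.lt_of_succ_lt h⟩ + 1) ∧
      g = δ ^ m * (List.ofFn fun j : Fin k => d (a j) ^ (e j)).prod := by
  obtain ⟨m, s, es, hes, rfl⟩ := closure_range_subset_normalForms hd hg
  refine ⟨m, es.length, fun j => s + (j : ℕ), fun j => es[j], fun j => hes _ (List.getElem_mem _),
    fun j _ => ?_, by rw [cyclicWord_eq_prod_ofFn]⟩
  push_cast
  ring

end DualBraid

/-- Every element of `B₃` can be written as `γⁿ · σ_{a₁}^{m₁} ⋯ σ_{a_k}^{m_k}` with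
`γ = σ₁σ₂`, `n ∈ ℤ`, `k ≥ 0`, the `m_j` positive, each `a_j ∈ {1, 2, X}` (encoded as
`0 ↦ σ₁`, `1 ↦ σ₂`, `2 ↦ σ_X = σ₁σ₂σ₁⁻¹`), and `(a₁, …, a_k)` a contiguous subsequence of
`(…, X, 1, 2, X, 1, 2, X, …)`, i.e. each consecutive pair is `(X,1)`, `(1,2)` or `(2,X)`;
equivalently `a_{j+1} = a_j + 1` in `ℤ/3`. -/
theorem statement14 (β : BraidGroup 3) :
    ∃ (m : ℤ) (k : ℕ) (a : Fin k → Fin 3) (e : Fin k → ℕ),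
      (∀ j, 0 < e j) ∧
      (∀ (j : ℕ) (h : j + 1 < k), a ⟨j + 1, h⟩ = a ⟨j, Nat.lt_of_succ_lt h⟩ + 1) ∧
      β = (braidσ 3 0 * braidσ 3 1) ^ m *
        (List.ofFn fun j : Fin k => dualGen (a j) ^ (e j)).prod :=
  DualBraid.exists_normalForm dualGen_mul_dualGen_succ (by simp [closure_range_dualGen])
end

section
/- (Well-definedness of the positive lift) Let M be a Coxeter matrix on a finite set S, with Coxeter group W(M) and Artin–Tits group B(M). If (t_1, …, t_k) and (u_1, …, u_k) are two reduced words for the same element w ∈ W(M) (i.e. s_{t_1}⋯s_{t_k} = s_{u_1}⋯s_{u_k} = w and k is the minimal length of any expression of w as a product of the generators s_t), then σ_{t_1}⋯σ_{t_k} = σ_{u_1}⋯σ_{u_k} in B(M). -/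
noncomputable section

section DihedralRotation

open Complex

/-- The matrix of `σ_i σ_j` in coordinates `(x, y) ↦ x e_i + y e_j` on a plane where the
Tits form has `B(e_i, e_i) = B(e_j, e_j) = 1` and `B(e_i, e_j) = -c`. -/
def dihedralRot (c : ℝ) (p : ℝ × ℝ) : ℝ × ℝ :=
  (2 * c * (2 * c * p.1 - p.2) - p.1, 2 * c * p.1 - p.2)

def dihedralCoord (ψ : ℝ) (p : ℝ × ℝ) : ℂ := p.1 - p.2 * exp (-ψ * I)

lemma dihedralCoord_dihedralRot (ψ : ℝ) (p : ℝ × ℝ) :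
    dihedralCoord ψ (dihedralRot (Real.cos ψ) p) = exp (2 * ψ * I) * dihedralCoord ψ p := by
  have hcos : cos (ψ : ℂ) = (exp (ψ * I) + exp (-ψ * I)) / 2 := rfl
  have hinv : exp (ψ * I) * exp (-ψ * I) = 1 := by rw [← exp_add]; simp
  have hsq : exp (2 * ψ * I) = exp (ψ * I) * exp (ψ * I) := by rw [← exp_add]; ring_nf
  simp only [dihedralCoord, dihedralRot]
  push_cast
  rw [hcos, hsq]
  linear_combination ((p.1 : ℂ) + exp (ψ * I) * p.2) * hinv

lemma dihedralCoord_injective {ψ : ℝ} (hψ : Real.sin ψ ≠ 0) :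
    Function.Injective (dihedralCoord ψ) := by
  intro p q h
  have him := congrArg im h
  have hre := congrArg re h
  simp [dihedralCoord, exp_re, exp_im] at him hre
  have h2 : p.2 = q.2 := him.resolve_right hψ
  exact Prod.ext (by rw [h2] at hre; linarith) h2

lemma Real.sin_pi_div_natCast_pos {m : ℕ} (hm : 2 ≤ m) : 0 < Real.sin (Real.pi / m) := by
  have : (2 : ℝ) ≤ m := by exact_mod_cast hm
  refine Real.sin_pos_of_pos_of_lt_pi (by positivity) ?_
  rw [div_lt_iff₀ (by positivity)]
  nlinarith [Real.pi_pos]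

lemma dihedralRot_iterate_eq_self_iff {m : ℕ} (hm : 2 ≤ m) (d : ℕ) (p : ℝ × ℝ) :
    (dihedralRot (Real.cos (Real.pi / m)))^[d] p = p ↔ p = 0 ∨ m ∣ d := by
  set ψ := Real.pi / m
  have hsin : Real.sin ψ ≠ 0 := (Real.sin_pi_div_natCast_pos hm).ne'
  have hζ : IsPrimitiveRoot (exp (2 * ψ * I)) m := by
    convert isPrimitiveRoot_exp m (by omega) using 2
    simp only [ψ]; push_cast; ring
  have hiter : ∀ d p, dihedralCoord ψ ((dihedralRot (Real.cos ψ))^[d] p)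
      = exp (2 * ψ * I) ^ d * dihedralCoord ψ p := by
    intro d p
    induction d with
    | zero => simp
    | succ d ih => rw [Function.iterate_succ_apply', dihedralCoord_dihedralRot, ih, pow_succ']; ring
  have hzero : dihedralCoord ψ 0 = 0 := by simp [dihedralCoord]
  rw [← (dihedralCoord_injective hsin).eq_iff, hiter, mul_left_eq_self₀, hζ.pow_eq_one_iff_dvd,
    ← hzero, (dihedralCoord_injective hsin).eq_iff, or_comm]

lemma dihedralRot_one_iterate (n : ℕ) :
    (dihedralRot 1)^[n] (1, 0) = ((1 + 2 * n : ℝ), (2 * n : ℝ)) := by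
  induction n with
  | zero => simp
  | succ n ih =>
    rw [Function.iterate_succ_apply', ih, dihedralRot]
    push_cast
    ext <;> ring

end DihedralRotation

namespace CoxeterMatrix

open Matrix

variable {B : Type*} (M : CoxeterMatrix B)

/-- The Gram matrix `B(e_i, e_j) = -cos (π / M i j)` of the Tits form; for `M i j = 0` the
convention `π / 0 = 0` gives the value `-1` that the infinite case calls for. -/
def cosGram : Matrix B B ℝ := Matrix.of fun i j => -Real.cos (Real.pi / M i j)

lemma cosGram_self (i : B) : M.cosGram i i = 1 := by simp [cosGram]

lemma cosGram_comm (i j : B) : M.cosGram i j = M.cosGram j i := by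
  simp [cosGram, M.symmetric i j]

variable [Fintype B] [DecidableEq B]

def geomReflectionFun (i : B) (v : B → ℝ) : B → ℝ :=
  v - Pi.single i (2 * (M.cosGram *ᵥ v) i)

lemma geomReflectionFun_involutive (i : B) : Function.Involutive (M.geomReflectionFun i) := by
  intro v
  have h : (M.cosGram *ᵥ M.geomReflectionFun i v) i = -(M.cosGram *ᵥ v) i := by
    simp [geomReflectionFun, Matrix.mulVec_sub, cosGram_self]; ring
  rw [geomReflectionFun, h, mul_neg, Pi.single_neg, geomReflectionFun, sub_neg_eq_add,
    sub_add_cancel]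

def geomReflection (i : B) : Equiv.Perm (B → ℝ) := (M.geomReflectionFun_involutive i).toPerm

lemma geomReflection_apply (i : B) (v : B → ℝ) :
    M.geomReflection i v = v - Pi.single i (2 * (M.cosGram *ᵥ v) i) := rfl

lemma geomReflection_add_single_add_single {i j : B} {c : ℝ} (hc : M.cosGram i j = -c)
    {z : B → ℝ} (hz : (M.cosGram *ᵥ z) i = 0) (x y : ℝ) :
    M.geomReflection i (z + Pi.single i x + Pi.single j y) =
      z + Pi.single i (2 * c * y - x) + Pi.single j y := by
  have h : (M.cosGram *ᵥ (z + Pi.single i x + Pi.single j y)) i = x - c * y := by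
    simp [Matrix.mulVec_add, hz, cosGram_self, hc]; ring
  rw [geomReflection_apply, h, show 2 * (x - c * y) = x - (2 * c * y - x) by ring, Pi.single_sub]
  abel

lemma geomReflection_mul_pow_apply {i j : B} {c : ℝ} (hc : M.cosGram i j = -c)
    {z : B → ℝ} (hzi : (M.cosGram *ᵥ z) i = 0) (hzj : (M.cosGram *ᵥ z) j = 0) (p : ℝ × ℝ)
    (n : ℕ) :
    ((M.geomReflection i * M.geomReflection j) ^ n) (z + Pi.single i p.1 + Pi.single j p.2) =
      z + Pi.single i ((dihedralRot c)^[n] p).1 + Pi.single j ((dihedralRot c)^[n] p).2 := by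
  induction n with
  | zero => simp
  | succ n ih =>
    set q := (dihedralRot c)^[n] p
    have hc' : M.cosGram j i = -c := by rw [cosGram_comm, hc]
    rw [pow_succ', Equiv.Perm.mul_apply, ih, Function.iterate_succ_apply', Equiv.Perm.mul_apply,
      add_right_comm, M.geomReflection_add_single_add_single hc' hzj, add_right_comm,
      M.geomReflection_add_single_add_single hc hzi]
    rfl

lemma exists_eq_add_single_add_single {i j : B} {c : ℝ} (hc : M.cosGram i j = -c)
    (hc2 : c ^ 2 ≠ 1) (v : B → ℝ) :
    ∃ (z : B → ℝ) (p : ℝ × ℝ), v = z + Pi.single i p.1 + Pi.single j p.2 ∧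
      (M.cosGram *ᵥ z) i = 0 ∧ (M.cosGram *ᵥ z) j = 0 := by
  have hc' : M.cosGram j i = -c := by rw [cosGram_comm, hc]
  have hden : 1 - c ^ 2 ≠ 0 := sub_ne_zero.mpr (Ne.symm hc2)
  set a := (M.cosGram *ᵥ v) i
  set b := (M.cosGram *ᵥ v) j
  set x := (a + c * b) / (1 - c ^ 2)
  set y := (b + c * a) / (1 - c ^ 2)
  refine ⟨v - Pi.single i x - Pi.single j y, (x, y), by abel, ?_, ?_⟩ <;>
  · simp [Matrix.mulVec_sub, cosGram_self, hc, hc', a, b, x, y]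
    field_simp
    ring

lemma geomReflection_mul_pow_eq_one_iff {i j : B} (hij : i ≠ j) (d : ℕ) :
    (M.geomReflection i * M.geomReflection j) ^ d = 1 ↔ M i j ∣ d := by
  set c := Real.cos (Real.pi / M i j)
  have hc : M.cosGram i j = -c := rfl
  have h0 : (M.cosGram *ᵥ (0 : B → ℝ)) = 0 := Matrix.mulVec_zero _
  constructor
  · intro h
    have hv := congrArg (· (0 + Pi.single i (1 : ℝ) + Pi.single j 0)) h
    simp only [Equiv.Perm.one_apply] at hv
    rw [M.geomReflection_mul_pow_apply hc (congrFun h0 i) (congrFun h0 j) (1, 0)] at hv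
    have hfix : (dihedralRot c)^[d] (1, 0) = (1, 0) := by
      ext
      · simpa [Pi.single_apply, hij] using congrFun hv i
      · simpa [Pi.single_apply, hij.symm] using congrFun hv j
    rcases Nat.eq_zero_or_pos (M i j) with hM | hM
    · rw [show c = 1 by simp [c, hM], dihedralRot_one_iterate] at hfix
      simpa [hM] using congrArg Prod.snd hfix
    · have hm : 2 ≤ M i j := by have := M.off_diagonal i j hij; omega
      exact ((dihedralRot_iterate_eq_self_iff hm d (1, 0)).mp hfix).resolve_left (by simp)
  · rintro ⟨k, rfl⟩
    rcases Nat.eq_zero_or_pos (M i j) with hM | hM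
    · simp [hM]
    have hm : 2 ≤ M i j := by have := M.off_diagonal i j hij; omega
    have hc2 : c ^ 2 ≠ 1 := by
      have := Real.sin_sq_add_cos_sq (Real.pi / M i j)
      nlinarith [Real.sin_pi_div_natCast_pos hm]
    rw [pow_mul]
    convert one_pow k
    ext1 v
    obtain ⟨z, p, rfl, hzi, hzj⟩ := M.exists_eq_add_single_add_single hc hc2 v
    rw [M.geomReflection_mul_pow_apply hc hzi hzj,
      (dihedralRot_iterate_eq_self_iff hm _ p).mpr (Or.inr dvd_rfl)]
    rfl

lemma geomReflection_isLiftable : M.IsLiftable M.geomReflection := by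
  intro i j
  rcases eq_or_ne i j with rfl | hij
  · rw [M.diagonal, pow_one]
    ext1 v
    exact M.geomReflectionFun_involutive i v
  · exact (M.geomReflection_mul_pow_eq_one_iff hij _).mpr dvd_rfl

end CoxeterMatrix

namespace CoxeterSystem

variable {B W : Type*} [Group W] {M : CoxeterMatrix B} (cs : CoxeterSystem M W)

local prefix:100 "s" => cs.simple
local prefix:100 "π" => cs.wordProd
local prefix:100 "ℓ" => cs.length
local prefix:100 "lis" => cs.leftInvSeq

theorem orderOf_simple_mul_simple [Finite B] (i j : B) : orderOf (s i * s j) = M i j := by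
  rcases eq_or_ne i j with rfl | hij
  · simp
  have := Fintype.ofFinite B
  classical
  refine Nat.dvd_antisymm (orderOf_dvd_of_pow_eq_one (cs.simple_mul_simple_pow i j)) ?_
  have hlift := cs.lift_apply_simple M.geomReflection_isLiftable
  rw [← M.geomReflection_mul_pow_eq_one_iff hij, ← hlift, ← hlift, ← map_mul, ← map_pow,
    pow_orderOf_eq_one, map_one]

/-- The alternating word `i j i j ⋯` of length `m` starting with `i`, whereas
`alternatingWord i j m` ends with `j`. -/
def altList (i j : B) : ℕ → List B
  | 0 => []
  | m + 1 => i :: altList j i m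

@[simp]
lemma length_altList (i j : B) (m : ℕ) : (altList i j m).length = m := by
  induction m generalizing i j with
  | zero => rfl
  | succ m ih => simp [altList, ih]

lemma prod_map_altList_two_mul {G : Type*} [Monoid G] (f : B → G) (i j : B) (m : ℕ) :
    ((altList i j (2 * m)).map f).prod = (f i * f j) ^ m := by
  induction m with
  | zero => simp [altList]
  | succ m ih => simp [Nat.mul_succ, altList, ih, pow_succ', mul_assoc]

lemma altList_eq_reverse_alternatingWord (i j : B) (m : ℕ) :
    altList i j m = (alternatingWord j i m).reverse := by
  induction m generalizing i j with
  | zero => rfl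
  | succ m ih =>
    rw [altList, ih, alternatingWord_succ, List.concat_eq_append, List.reverse_append]
    rfl

lemma wordProd_altList_braid (i j : B) : π (altList i j (M i j)) = π (altList j i (M i j)) := by
  have h := cs.wordProd_braidWord_eq j i
  simp only [braidWord, M.symmetric j i] at h
  rw [altList_eq_reverse_alternatingWord, altList_eq_reverse_alternatingWord, wordProd_reverse,
    wordProd_reverse, h]

lemma leftInvSeq_altList (i j : B) (n : ℕ) :
    lis (altList i j n) = (List.range n).map (fun k => s i * (s j * s i) ^ k) := by
  induction n generalizing i j with
  | zero => rfl
  | succ n ih =>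
    rw [altList, leftInvSeq, ih, List.range_succ_eq_map, List.map_cons, List.map_map, List.map_map]
    congr 1
    · simp
    · refine List.map_congr_left fun k _ => ?_
      simp [MulAut.conj_apply, pow_succ', mul_assoc, ← mul_pow_mul]

lemma leftInvSeq_altList_two_mul (i j : B) :
    lis (altList i j (2 * M i j)) = lis (altList i j (M i j)) ++ lis (altList i j (M i j)) := by
  simp only [leftInvSeq_altList, two_mul, List.range_add, List.map_append, List.map_map]
  congr 1
  refine List.map_congr_left fun k _ => ?_
  simp [pow_add]

lemma simple_mul_mul_simple_eq_simple_iff (i : B) (w : W) : s i * w * s i = s i ↔ w = s i := by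
  constructor
  · intro h
    simpa [mul_assoc] using congrArg (s i * · * s i) h
  · rintro rfl
    simp

section ReflectionFlip

variable [DecidableEq W]

def reflectionFlipFun (i : B) (p : W × ZMod 2) : W × ZMod 2 :=
  (s i * p.1 * s i, p.2 + if p.1 = s i then 1 else 0)

lemma reflectionFlipFun_involutive (i : B) : Function.Involutive (cs.reflectionFlipFun i) := by
  rintro ⟨w, ε⟩
  ext
  · simp [reflectionFlipFun, mul_assoc]
  · by_cases h : w = s i
    · simp [reflectionFlipFun, h, add_assoc, CharTwo.add_self_eq_zero]
    · simp [reflectionFlipFun, cs.simple_mul_mul_simple_eq_simple_iff, h]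

def reflectionFlip (i : B) : Equiv.Perm (W × ZMod 2) := (cs.reflectionFlipFun_involutive i).toPerm

lemma prod_map_reflectionFlip_apply (ω : List B) (w : W) (ε : ZMod 2) :
    (ω.map cs.reflectionFlip).prod (w, ε) =
      (π ω * w * (π ω)⁻¹, ε + (lis ω).count (π ω * w * (π ω)⁻¹)) := by
  induction ω generalizing w ε with
  | nil => simp
  | cons i ω ih =>
    set u := π ω * w * (π ω)⁻¹
    have hu : π (i :: ω) * w * (π (i :: ω))⁻¹ = s i * u * s i := by
      simp [u, wordProd_cons, mul_assoc]
    have hcount : (lis (i :: ω)).count (s i * u * s i) =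
        (lis ω).count u + if u = s i then 1 else 0 := by
      have hconj : s i * u * s i = MulAut.conj (s i) u := by simp
      rw [leftInvSeq, List.count_cons, hconj,
        List.count_map_of_injective _ _ (MulAut.conj (s i)).injective]
      congr 1
      simp only [beq_iff_eq, MulAut.conj_apply, inv_simple]
      exact if_congr (eq_comm.trans (cs.simple_mul_mul_simple_eq_simple_iff i u)) rfl rfl
    rw [List.map_cons, List.prod_cons, Equiv.Perm.mul_apply, ih, hu, hcount]
    simp [reflectionFlip, reflectionFlipFun, u, add_assoc]

lemma reflectionFlip_isLiftable : M.IsLiftable cs.reflectionFlip := by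
  intro i j
  rw [← prod_map_altList_two_mul]
  ext1 ⟨w, ε⟩
  have hπ : π (altList i j (2 * M i j)) = 1 := by
    rw [wordProd, prod_map_altList_two_mul, cs.simple_mul_simple_pow]
  rw [prod_map_reflectionFlip_apply, hπ, leftInvSeq_altList_two_mul, List.count_append]
  simp [← two_mul, show (2 : ZMod 2) = 0 from rfl]

theorem count_leftInvSeq_eq_of_wordProd_eq {ω ω' : List B} (h : π ω = π ω') (t : W) :
    ((lis ω).count t : ZMod 2) = (lis ω').count t := by
  set F := cs.lift ⟨_, cs.reflectionFlip_isLiftable⟩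
  have hF : ∀ ω, F (π ω) = (ω.map cs.reflectionFlip).prod := fun ω => by
    rw [wordProd, map_list_prod, List.map_map]
    congr 1
    exact List.map_congr_left fun i _ => cs.lift_apply_simple cs.reflectionFlip_isLiftable i
  have hcount : ∀ ω, ((lis ω).count t : ZMod 2) = (F (π ω) ((π ω)⁻¹ * t * π ω, 0)).2 :=
    fun ω => by simp [hF, prod_map_reflectionFlip_apply, mul_assoc]
  rw [hcount, hcount, h]

end ReflectionFlip

theorem leftInvSeq_subset_of_nodup {ω ω' : List B} (hω : (lis ω).Nodup) (h : π ω = π ω') :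
    lis ω ⊆ lis ω' := by
  classical
  intro t ht
  have hodd : ((lis ω').count t : ZMod 2) = 1 := by
    rw [← cs.count_leftInvSeq_eq_of_wordProd_eq h, List.count_eq_one_of_mem hω ht, Nat.cast_one]
  refine List.count_pos_iff.mp (Nat.pos_of_ne_zero fun h0 => ?_)
  rw [h0, Nat.cast_zero] at hodd
  exact zero_ne_one hodd

theorem isReduced_of_nodup_leftInvSeq {ω : List B} (hω : (lis ω).Nodup) : cs.IsReduced ω := by
  obtain ⟨ω', hω', h⟩ := cs.exists_isReduced (π ω)
  have hle := hω.length_le_of_subset (cs.leftInvSeq_subset_of_nodup hω h)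
  rw [length_leftInvSeq, length_leftInvSeq] at hle
  exact le_antisymm (cs.length_wordProd_le ω) (h ▸ hω'.eq ▸ hle)

theorem isReduced_altList [Finite B] {i j : B} {n : ℕ} (hn : M i j = 0 ∨ n ≤ M i j) :
    cs.IsReduced (altList i j n) := by
  refine cs.isReduced_of_nodup_leftInvSeq ?_
  rw [leftInvSeq_altList]
  refine List.nodup_range.map_on fun k hk k' hk' hkk' => ?_
  rw [mul_right_inj, pow_inj_mod, orderOf_simple_mul_simple, M.symmetric] at hkk'
  rw [List.mem_range] at hk hk'
  rcases hn with h0 | hle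
  · simpa [h0] using hkk'
  · rwa [Nat.mod_eq_of_lt (by omega), Nat.mod_eq_of_lt (by omega)] at hkk'

theorem exists_eraseIdx_of_isLeftDescent {ω : List B} {i : B} (h : cs.IsLeftDescent (π ω) i) :
    ∃ k < ω.length, π (ω.eraseIdx k) = s i * π ω := by
  obtain ⟨ω', hω', hπ⟩ := cs.exists_isReduced (s i * π ω)
  have hred : cs.IsReduced (i :: ω') := by
    have : π (i :: ω') = π ω := by rw [wordProd_cons, ← hπ, simple_mul_simple_cancel_left]
    rw [IsReduced, this, ← cs.isLeftDescent_iff.mp h, hπ, hω'.eq, List.length_cons]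
  have hmem : s i ∈ lis ω := by
    refine cs.leftInvSeq_subset_of_nodup hred.nodup_leftInvSeq ?_ List.mem_cons_self
    rw [wordProd_cons, ← hπ, simple_mul_simple_cancel_left]
  obtain ⟨k, hk, hki⟩ := List.mem_iff_getElem.mp hmem
  refine ⟨k, by simpa using hk, ?_⟩
  rw [← getD_leftInvSeq_mul_wordProd, List.getD_eq_getElem _ _ hk, hki]

theorem exists_isReduced_cons_append {u v : List B} {x : B} (huv : cs.IsReduced (u ++ v))
    (hx : cs.IsLeftDescent (π (u ++ v)) x) (hxu : cs.IsReduced (x :: u)) :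
    ∃ v', cs.IsReduced (x :: u ++ v') ∧ π (x :: u ++ v') = π (u ++ v) := by
  obtain ⟨k, hk, hπ⟩ := cs.exists_eraseIdx_of_isLeftDescent hx
  rcases lt_or_ge k u.length with hku | hku
  · -- deleting a letter of `u` would make `x :: u` non-reduced
    rw [List.eraseIdx_append_of_lt_length hku, wordProd_append, wordProd_append, ← mul_assoc,
      mul_left_inj, ← wordProd_cons] at hπ
    have := cs.length_wordProd_le (u.eraseIdx k)
    rw [hπ, hxu.eq, List.length_eraseIdx_of_lt hku, List.length_cons] at this
    omega
  · have hπ' : π (x :: u ++ v.eraseIdx (k - u.length)) = π (u ++ v) := by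
      rw [List.cons_append, wordProd_cons, ← List.eraseIdx_append_of_length_le hku, hπ,
        simple_mul_simple_cancel_left]
    refine ⟨v.eraseIdx (k - u.length), ?_, hπ'⟩
    rw [List.length_append] at hk
    rw [IsReduced, hπ', huv.eq]
    simp [List.length_eraseIdx_of_lt (show k - u.length < v.length by omega)]
    omega

theorem isLeftDescent_wordProd_cons {i : B} {ω : List B} (h : cs.IsReduced (i :: ω)) :
    cs.IsLeftDescent (π (i :: ω)) i := by
  have := cs.length_wordProd_le ω
  rw [IsLeftDescent, wordProd_cons, simple_mul_simple_cancel_left, ← wordProd_cons, h.eq,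
    List.length_cons]
  omega

variable [Finite B]

theorem exists_isReduced_altList_succ_append {w : W} {x y : B} {n : ℕ}
    (hx : cs.IsLeftDescent w x) (hn : M x y = 0 ∨ n + 1 ≤ M x y)
    (h : ∃ v, cs.IsReduced (altList y x n ++ v) ∧ π (altList y x n ++ v) = w) :
    ∃ v, cs.IsReduced (altList x y (n + 1) ++ v) ∧ π (altList x y (n + 1) ++ v) = w := by
  obtain ⟨v, hred, rfl⟩ := h
  exact cs.exists_isReduced_cons_append hred hx (cs.isReduced_altList hn)

theorem exists_isReduced_altList_append {w : W} {i j : B} (hi : cs.IsLeftDescent w i)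
    (hj : cs.IsLeftDescent w j) :
    M i j ≠ 0 ∧
      ∃ v, cs.IsReduced (altList i j (M i j) ++ v) ∧ π (altList i j (M i j) ++ v) = w := by
  have key : ∀ n, (M i j = 0 ∨ n ≤ M i j) →
      (∃ v, cs.IsReduced (altList i j n ++ v) ∧ π (altList i j n ++ v) = w) ∧
      (∃ v, cs.IsReduced (altList j i n ++ v) ∧ π (altList j i n ++ v) = w) := by
    intro n hn
    induction n with
    | zero =>
      obtain ⟨ω, hω, rfl⟩ := cs.exists_isReduced w
      exact ⟨⟨ω, hω, rfl⟩, ⟨ω, hω, rfl⟩⟩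
    | succ n ih =>
      have ih := ih (hn.imp_right (by omega))
      exact ⟨cs.exists_isReduced_altList_succ_append hi hn ih.2,
        cs.exists_isReduced_altList_succ_append hj (M.symmetric i j ▸ hn) ih.1⟩
  refine ⟨fun h0 => ?_, (key _ (Or.inr le_rfl)).1⟩
  obtain ⟨v, hred, hπ⟩ := (key (ℓ w + 1) (Or.inl h0)).1
  have := hred.eq
  rw [hπ, List.length_append, length_altList] at this
  omega

theorem prod_map_eq_of_isReduced {G : Type*} [Monoid G] (f : B → G)
    (hf : ∀ i j, M i j ≠ 0 →
      ((altList i j (M i j)).map f).prod = ((altList j i (M i j)).map f).prod)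
    {ω ω' : List B} (hω : cs.IsReduced ω) (hω' : cs.IsReduced ω') (h : π ω = π ω') :
    (ω.map f).prod = (ω'.map f).prod := by
  induction hn : ω.length using Nat.strong_induction_on generalizing ω ω' with
  | _ n ih =>
  have hn' : ω'.length = n := by rw [← hω'.eq, ← h, hω.eq, hn]
  have same_head : ∀ (x : B) (t u : List B), t.length + 1 = n → cs.IsReduced (x :: t) →
      cs.IsReduced (x :: u) → π (x :: t) = π (x :: u) →
      ((x :: t).map f).prod = ((x :: u).map f).prod := by
    intro x t u ht hxt hxu hπ
    rw [wordProd_cons, wordProd_cons, mul_right_inj] at hπ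
    simp only [List.map_cons, List.prod_cons]
    rw [ih t.length (by omega) (by simpa using hxt.drop 1) (by simpa using hxu.drop 1) hπ rfl]
  match ω, ω' with
  | [], [] => rfl
  | [], _ :: _ | _ :: _, [] => simp at hn hn'; omega
  | i :: l, j :: l' =>
    simp only [List.length_cons] at hn hn'
    rcases eq_or_ne i j with rfl | hij
    · exact same_head i l l' hn hω hω' h
    obtain ⟨hM, v, hA, hπA⟩ := cs.exists_isReduced_altList_append
      (cs.isLeftDescent_wordProd_cons hω) (h ▸ cs.isLeftDescent_wordProd_cons hω')
    obtain ⟨m, hm⟩ := Nat.exists_eq_add_one_of_ne_zero hM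
    have hπA' : π (altList j i (M i j) ++ v) = π (i :: l) := by
      rw [wordProd_append, ← wordProd_altList_braid, ← wordProd_append, hπA]
    have hA' : cs.IsReduced (altList j i (M i j) ++ v) := by
      rw [IsReduced, hπA', ← hπA, hA.eq]; simp
    have hlen : (altList i j (M i j) ++ v).length = n := by rw [← hA.eq, hπA, hω.eq]; simp [hn]
    rw [hm] at hA hA' hπA hπA' hlen
    calc ((i :: l).map f).prod = ((altList i j (m + 1) ++ v).map f).prod :=
          same_head i l _ hn hω hA hπA.symm
      _ = ((altList j i (m + 1) ++ v).map f).prod := by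
          simp only [List.map_append, List.prod_append, ← hm, hf i j hM]
      _ = ((j :: l').map f).prod :=
          (same_head j l' _ hn' hω' hA' (h.symm.trans hπA'.symm)).symm

end CoxeterSystem

end

theorem mk_altWord {B : Type*} (M : CoxeterMatrix B) (i j : B) (m : ℕ) :
    PresentedGroup.mk (artinRels M) (altWord i j m) =
      ((CoxeterSystem.altList i j m).map (artinσ M)).prod := by
  induction m generalizing i j with
  | zero => rfl
  | succ m ih => rw [altWord, map_mul, ih]; rfl

theorem prod_map_artinσ_altList_braid {B : Type*} (M : CoxeterMatrix B) (i j : B)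
    (hM : M i j ≠ 0) :
    ((CoxeterSystem.altList i j (M i j)).map (artinσ M)).prod =
      ((CoxeterSystem.altList j i (M i j)).map (artinσ M)).prod := by
  rw [← mk_altWord, ← mk_altWord]
  exact PresentedGroup.mk_eq_mk_of_mul_inv_mem ⟨i, j, hM, rfl⟩

/-- Well-definedness of the positive lift: if two reduced words represent the same element
of the Coxeter group `W(M)`, then the corresponding products of Artin–Tits generators
agree in the Artin–Tits group `B(M)`. -/
theorem statement18 {B : Type} [Fintype B] (M : CoxeterMatrix B) (l₁ l₂ : List B)
    (h₁ : M.toCoxeterSystem.IsReduced l₁) (h₂ : M.toCoxeterSystem.IsReduced l₂)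
    (h : M.toCoxeterSystem.wordProd l₁ = M.toCoxeterSystem.wordProd l₂) :
    (l₁.map (artinσ M)).prod = (l₂.map (artinσ M)).prod :=
  M.toCoxeterSystem.prod_map_eq_of_isReduced (artinσ M) (prod_map_artinσ_altList_braid M) h₁ h₂ h
end
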